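/- Let $\xi \sim \mathcal{N}(m, \sigma^2)$ with $\sigma > 0$. Then there exists a universal constant $c > 0$ such that for all $\epsilon > 0$, $\mathbb{P}(\xi \in [0,\epsilon]) - \mathbb{P}(\xi \in [-\epsilon, 0]) \le c\, \epsilon^2/\sigma^2$. -/

import Mathlib

open MeasureTheory ProbabilityTheory Real
open scoped ENNReal NNReal RealInnerProductSpace

noncomputable section

/-- Identify a plain vector with a point of Euclidean space. -/
def toEuc {p : ℕ} (v : Fin p → ℝ) : EuclideanSpace ℝ (Fin p) :=
  (EuclideanSpace.equiv (Fin p) ℝ).symm v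

/-- Standard Gaussian measure `N(0, I_p)` on `ℝ^p`. -/
def stdGaussian (p : ℕ) : Measure (EuclideanSpace ℝ (Fin p)) :=
  (Measure.pi (fun _ : Fin p => gaussianReal 0 1)).map toEuc

/-- The former `Matrix.PosSemidef.sqrt`, spelled out with its old definition. -/
def psdSqrt {p : ℕ} {C : Matrix (Fin p) (Fin p) ℝ} (hC : C.PosSemidef) :
    Matrix (Fin p) (Fin p) ℝ :=
  hC.1.eigenvectorUnitary.1 * Matrix.diagonal ((↑) ∘ (√·) ∘ hC.1.eigenvalues) *
    (star hC.1.eigenvectorUnitary : Matrix (Fin p) (Fin p) ℝ)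

/-- Gaussian measure `N(μ, C)` on `ℝ^p`, as the image of the standard Gaussian
under `x ↦ μ + C^{1/2} x`. -/
def gaussianE {p : ℕ} (μ : EuclideanSpace ℝ (Fin p)) (C : Matrix (Fin p) (Fin p) ℝ)
    (hC : C.PosSemidef) : Measure (EuclideanSpace ℝ (Fin p)) :=
  (stdGaussian p).map (fun x => μ + toEuc ((psdSqrt hC).mulVec (fun i => x i)))

/-- Misclassification risk under uniform prior. -/
def risk {p : ℕ} (P0 P1 : Measure (EuclideanSpace ℝ (Fin p)))
    (g : EuclideanSpace ℝ (Fin p) → Bool) : ℝ :=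
  (1/2) * ((P1 {x | g x ≠ true}).toReal + (P0 {x | g x ≠ false}).toReal)

/-- Standard normal cumulative distribution function. -/
def Phi (x : ℝ) : ℝ := ((gaussianReal 0 1) (Set.Iic x)).toReal

/-- `F_{10} = C^{-1}(μ₁ - μ₀)`. -/
def F10 {p : ℕ} (μ0 μ1 : EuclideanSpace ℝ (Fin p)) (C : Matrix (Fin p) (Fin p) ℝ) :
    EuclideanSpace ℝ (Fin p) :=
  toEuc (C⁻¹.mulVec (fun i => μ1 i - μ0 i))

/-- `s_{10} = (μ₁ + μ₀)/2`. -/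
def s10 {p : ℕ} (μ0 μ1 : EuclideanSpace ℝ (Fin p)) : EuclideanSpace ℝ (Fin p) :=
  (2 : ℝ)⁻¹ • (μ1 + μ0)

/-- The Fisher/Bayes linear discriminant rule. -/
def bayes {p : ℕ} (μ0 μ1 : EuclideanSpace ℝ (Fin p)) (C : Matrix (Fin p) (Fin p) ℝ) :
    EuclideanSpace ℝ (Fin p) → Bool :=
  fun x => decide (0 ≤ ⟪F10 μ0 μ1 C, x - s10 μ0 μ1⟫)

/-- Multiplication of a vector by `C^{1/2}` (i.e. the `L₂(P_C)` geometry). -/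
def sqrtMul {p : ℕ} (C : Matrix (Fin p) (Fin p) ℝ) (hC : C.PosSemidef)
    (v : EuclideanSpace ℝ (Fin p)) : EuclideanSpace ℝ (Fin p) :=
  toEuc ((psdSqrt hC).mulVec (fun i => v i))

/-! The difference of the two probabilities is `∫₀^ε (f(t) - f(-t)) dt` for the density `f` of
`N(m, σ²)`. Since `|f'(x)| = |x - m| f(x) / σ² ≤ 1 / σ²`, the density is `σ⁻²`-Lipschitz, so the
integrand is at most `2t / σ²`, and integrating gives `ε² / σ²`. -/

lemma LipschitzWith.intervalIntegral_sub_intervalIntegral_le {f : ℝ → ℝ} {L : ℝ≥0}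
    (hf : LipschitzWith L f) (a : ℝ) {ε : ℝ} (hε : 0 ≤ ε) :
    (∫ x in a..a + ε, f x) - ∫ x in a - ε..a, f x ≤ L * ε ^ 2 := by
  have hright : ∫ t in (0 : ℝ)..ε, f (a + t) = ∫ x in a..a + ε, f x := by
    rw [intervalIntegral.integral_comp_add_left, add_zero]
  have hleft : ∫ t in (0 : ℝ)..ε, f (a - t) = ∫ x in a - ε..a, f x := by
    rw [intervalIntegral.integral_comp_sub_left, sub_zero]
  have hcont := hf.continuous
  rw [← hright, ← hleft, ← intervalIntegral.integral_sub
    ((by fun_prop : Continuous fun t => f (a + t)).intervalIntegrable _ _)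
    ((by fun_prop : Continuous fun t => f (a - t)).intervalIntegrable _ _)]
  calc ∫ t in (0 : ℝ)..ε, f (a + t) - f (a - t)
      ≤ ∫ t in (0 : ℝ)..ε, 2 * L * t := by
        refine intervalIntegral.integral_mono_on hε
          ((by fun_prop : Continuous fun t => f (a + t) - f (a - t)).intervalIntegrable _ _)
          ((by fun_prop : Continuous fun t : ℝ => 2 * L * t).intervalIntegrable _ _)
          fun t ht => ?_
        calc f (a + t) - f (a - t) ≤ dist (f (a + t)) (f (a - t)) := le_abs_self _
          _ ≤ L * dist (a + t) (a - t) := hf.dist_le_mul _ _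
          _ = 2 * L * t := by
            rw [Real.dist_eq, show a + t - (a - t) = 2 * t by ring,
              abs_of_nonneg (by linarith [ht.1])]
            ring
    _ = L * ε ^ 2 := by
        rw [intervalIntegral.integral_const_mul, integral_id]
        ring

namespace ProbabilityTheory

lemma hasDerivAt_gaussianPDFReal (μ : ℝ) (v : ℝ≥0) (x : ℝ) :
    HasDerivAt (gaussianPDFReal μ v) (-(x - μ) / v * gaussianPDFReal μ v x) x := by
  have hexponent : HasDerivAt (fun y => -(y - μ) ^ 2 / (2 * (v : ℝ))) (-(x - μ) / v) x := by
    refine ((((hasDerivAt_id' x).sub_const μ).pow 2).neg.div_const (2 * (v : ℝ))).congr_deriv ?_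
    rw [← mul_div_mul_left _ _ (two_ne_zero' ℝ)]
    ring
  refine (hexponent.exp.const_mul (√(2 * π * v))⁻¹).congr_deriv ?_
  rw [gaussianPDFReal]
  ring

lemma abs_deriv_gaussianPDFReal_le (μ : ℝ) (v : ℝ≥0) (x : ℝ) :
    |-(x - μ) / v * gaussianPDFReal μ v x| ≤ (v : ℝ)⁻¹ := by
  rcases eq_or_ne v 0 with rfl | hv
  · simp
  have hv : (0 : ℝ) < v := by positivity
  calc |-(x - μ) / v * gaussianPDFReal μ v x|
      = (√(2 * π * v))⁻¹ / v * |mulExpNegMulSq (2 * v)⁻¹ (x - μ)| := by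
        rw [gaussianPDFReal, mulExpNegSq_apply, abs_mul, abs_mul, abs_mul, abs_div, abs_neg,
          abs_of_pos hv, abs_of_pos (by positivity : (0 : ℝ) < (√(2 * π * v))⁻¹),
          abs_exp, abs_exp]
        field_simp
    _ ≤ (√(2 * π * v))⁻¹ / v * (√((2 * v)⁻¹))⁻¹ := by
        gcongr
        exact abs_mulExpNegMulSq_le (by positivity)
    _ = (√π)⁻¹ * (v : ℝ)⁻¹ := by
        rw [sqrt_inv, inv_inv, show (2 * π * v : ℝ) = π * (2 * v) by ring,
          sqrt_mul pi_pos.le]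
        field_simp
    _ ≤ (v : ℝ)⁻¹ := by
        refine mul_le_of_le_one_left (by positivity) (inv_le_one_of_one_le₀ ?_)
        exact one_le_sqrt.mpr (by linarith [pi_gt_three])

lemma lipschitzWith_gaussianPDFReal (μ : ℝ) (v : ℝ≥0) :
    LipschitzWith v⁻¹ (gaussianPDFReal μ v) := by
  refine lipschitzWith_of_nnnorm_deriv_le
    (fun x => (hasDerivAt_gaussianPDFReal μ v x).differentiableAt) fun x => ?_
  rw [(hasDerivAt_gaussianPDFReal μ v x).deriv, ← NNReal.coe_le_coe, coe_nnnorm, NNReal.coe_inv]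
  exact abs_deriv_gaussianPDFReal_le μ v x

lemma toReal_gaussianReal_Icc (μ : ℝ) {v : ℝ≥0} (hv : v ≠ 0) {a b : ℝ} (hab : a ≤ b) :
    (gaussianReal μ v (Set.Icc a b)).toReal = ∫ x in a..b, gaussianPDFReal μ v x := by
  rw [gaussianReal_apply_eq_integral μ hv,
    ENNReal.toReal_ofReal (integral_nonneg fun x => gaussianPDFReal_nonneg μ v x),
    intervalIntegral.integral_of_le hab, integral_Icc_eq_integral_Ioc]

lemma toReal_gaussianReal_Icc_sub_Icc_le (μ : ℝ) {v : ℝ≥0} (hv : v ≠ 0) (a : ℝ) {ε : ℝ}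
    (hε : 0 ≤ ε) :
    (gaussianReal μ v (Set.Icc a (a + ε))).toReal - (gaussianReal μ v (Set.Icc (a - ε) a)).toReal
      ≤ ε ^ 2 / v := by
  rw [toReal_gaussianReal_Icc μ hv (by linarith), toReal_gaussianReal_Icc μ hv (by linarith),
    div_eq_inv_mul, ← NNReal.coe_inv]
  exact (lipschitzWith_gaussianPDFReal μ v).intervalIntegral_sub_intervalIntegral_le a hε

end ProbabilityTheory

/-- Lemma 1: if `ξ ~ N(m, σ²)` with `σ > 0`, there is a universal `c > 0` with
`P(ξ ∈ [0,ε]) - P(ξ ∈ [-ε,0]) ≤ c ε²/σ²` for all `ε > 0`. -/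
theorem stmt1 :
    ∃ c > (0 : ℝ), ∀ (m σ : ℝ), 0 < σ → ∀ ε > (0 : ℝ),
      ((gaussianReal m ((σ ^ 2).toNNReal)) (Set.Icc 0 ε)).toReal
        - ((gaussianReal m ((σ ^ 2).toNNReal)) (Set.Icc (-ε) 0)).toReal
      ≤ c * ε ^ 2 / σ ^ 2 := by
  refine ⟨1, one_pos, fun m σ hσ ε hε => ?_⟩
  have hv : (σ ^ 2).toNNReal ≠ 0 := (Real.toNNReal_pos.mpr (by positivity)).ne'
  have h := toReal_gaussianReal_Icc_sub_Icc_le m hv 0 hε.le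
  rwa [zero_add, zero_sub, Real.coe_toNNReal _ (by positivity), ← one_mul (ε ^ 2)] at h
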